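/- Let G be a group with lower central series G = G₀ = G₁ ⊇ G₂ ⊇ ... (where G₀ = G₁ = G and G_{i+1} = [G, G_i]), and let ℓ ≥ 1. Then the Host–Kra cube group HK^ℓ(G_•) of the lower central series filtration — the subgroup of G^{{0,1}^ℓ} generated by all elements [g]_F where F ⊆ {0,1}^ℓ is a face of codimension i and g ∈ G_i, for all i ≥ 1 — is equal to the subgroup of G^{{0,1}^ℓ} generated by the elements [h]_F with h ∈ G and F a hyperface (a face of codimension 1). -/

import Mathlib

/-!
Common definitions: face elements, Host–Kra cube groups, dynamical cubes, and the
regional proximal relation of order `s`, following Gutman–Manners–Varjú.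

We model the discrete cube `{0,1}^ℓ` as `Fin ℓ → Bool`.
-/

open scoped Classical in
/-- The face element `[g]_F ∈ H^{{0,1}^ℓ}`: equal to `g` on `F` and to the identity
elsewhere. -/
noncomputable def faceEl (H : Type*) [Group H] {ℓ : ℕ} (g : H) (F : Set (Fin ℓ → Bool)) :
    (Fin ℓ → Bool) → H :=
  fun ω => if ω ∈ F then g else 1

/-- A hyperface of the discrete cube `{0,1}^ℓ`: a set of the form `{ω | ω i = a}`. -/
def IsHyperface {ℓ : ℕ} (F : Set (Fin ℓ → Bool)) : Prop :=
  ∃ (i : Fin ℓ) (a : Bool), F = {ω | ω i = a}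

/-- The Host–Kra cube group `HK^ℓ(H)`: the subgroup of `H^{{0,1}^ℓ}` generated by the
face elements `[h]_F` with `F` a hyperface. -/
noncomputable def hostKra (H : Type*) [Group H] (ℓ : ℕ) : Subgroup ((Fin ℓ → Bool) → H) :=
  Subgroup.closure {γ | ∃ (g : H) (F : Set (Fin ℓ → Bool)), IsHyperface F ∧ γ = faceEl H g F}

/-- The set of dynamical cubes `C^ℓ_H(X)`: the closure of the orbit of the constant
configurations under the Host–Kra cube group. -/
noncomputable def dynCubes (H : Type*) (X : Type*) [Group H] [TopologicalSpace X]
    [MulAction H X] (ℓ : ℕ) : Set ((Fin ℓ → Bool) → X) :=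
  closure {c | ∃ γ ∈ hostKra H ℓ, ∃ x : X, c = fun ω => γ ω • x}

/-- The corner configuration `∟^ℓ(x;y)`: the configuration whose vertex at `(1,…,1)` is `y`
and all of whose other vertices are `x`. -/
noncomputable def corner {X : Type*} (ℓ : ℕ) (x y : X) : (Fin ℓ → Bool) → X :=
  fun ω => if ω = (fun _ => true) then y else x

/-- The regional proximal relation of order `s`:
`RP^s_H(X) = {(x,y) | ∟^{s+1}(x;y) ∈ C^{s+1}_H(X)}`. -/
noncomputable def RP (H : Type*) (X : Type*) [Group H] [TopologicalSpace X] [MulAction H X]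
    (s : ℕ) : Set (X × X) :=
  {p | corner (s + 1) p.1 p.2 ∈ dynCubes H X (s + 1)}

/-- A face of the discrete cube `{0,1}^ℓ` of codimension `d`: the set of vertices where the
coordinates in a prescribed `d`-element set of indices take prescribed values. -/
def IsFaceOfCodim {ℓ : ℕ} (F : Set (Fin ℓ → Bool)) (d : ℕ) : Prop :=
  ∃ (S : Finset (Fin ℓ)) (a : Fin ℓ → Bool), S.card = d ∧ F = {ω | ∀ i ∈ S, ω i = a i}

/-!
A face of codimension `d + 1` is the intersection of a face of codimension `d` with a
hyperface, and `⁅[x]_F, [y]_H⁆ = [⁅x, y⁆]_{F ∩ H}`. Since `G_{d+2} = ⁅G_{d+1}, G⁆`, induction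
on `d` writes every generator `[g]_F` with `g ∈ G_{d+1}` and `F` of codimension `d + 1` as a
word in hyperface elements.
-/

open scoped commutatorElement

noncomputable def faceHom (G : Type*) [Group G] {ℓ : ℕ} (F : Set (Fin ℓ → Bool)) :
    G →* ((Fin ℓ → Bool) → G) where
  toFun g := faceEl G g F
  map_one' := by funext ω; simp [faceEl]
  map_mul' g h := by funext ω; simp only [faceEl, Pi.mul_apply]; split <;> simp

lemma faceHom_apply {G : Type*} [Group G] {ℓ : ℕ} (F : Set (Fin ℓ → Bool)) (g : G) :
    faceHom G F g = faceEl G g F :=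
  rfl

lemma commutatorElement_faceEl {G : Type*} [Group G] {ℓ : ℕ} (x y : G)
    (F₁ F₂ : Set (Fin ℓ → Bool)) :
    ⁅faceEl G x F₁, faceEl G y F₂⁆ = faceEl G ⁅x, y⁆ (F₁ ∩ F₂) := by
  funext ω
  simp only [faceEl, commutatorElement_def, Pi.mul_apply, Pi.inv_apply, Set.mem_inter_iff]
  by_cases h₁ : ω ∈ F₁ <;> by_cases h₂ : ω ∈ F₂ <;> simp [h₁, h₂]

lemma IsFaceOfCodim.exists_eq_inter {ℓ d : ℕ} {F : Set (Fin ℓ → Bool)}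
    (hF : IsFaceOfCodim F (d + 1)) :
    ∃ F₁ F₂ : Set (Fin ℓ → Bool), IsFaceOfCodim F₁ d ∧ IsFaceOfCodim F₂ 1 ∧ F = F₁ ∩ F₂ := by
  obtain ⟨S, a, hcard, rfl⟩ := hF
  obtain ⟨i, hi⟩ : S.Nonempty := Finset.card_pos.mp (by omega)
  refine ⟨{ω | ∀ j ∈ S.erase i, ω j = a j}, {ω | ∀ j ∈ ({i} : Finset _), ω j = a j},
    ⟨S.erase i, a, by simp [Finset.card_erase_of_mem hi, hcard], rfl⟩,
    ⟨{i}, a, Finset.card_singleton i, rfl⟩, ?_⟩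
  ext ω
  simp only [Set.mem_inter_iff, Set.mem_ofPred_eq, Finset.mem_singleton, forall_eq]
  refine ⟨fun h => ⟨fun j hj => h j (Finset.mem_of_mem_erase hj), h i hi⟩, ?_⟩
  rintro ⟨h, hi'⟩ j hj
  by_cases hji : j = i
  · exact hji ▸ hi'
  · exact h j (Finset.mem_erase.mpr ⟨hji, hj⟩)

lemma faceEl_mem_of_mem_lowerCentralSeries {G : Type*} [Group G] {ℓ : ℕ} {S : Subgroup G}
    {N : Subgroup ((Fin ℓ → Bool) → G)}
    (hN : ∀ h ∈ S, ∀ F : Set (Fin ℓ → Bool), IsFaceOfCodim F 1 → faceEl G h F ∈ N)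
    {d : ℕ} {g : G} {F : Set (Fin ℓ → Bool)} (hF : IsFaceOfCodim F (d + 1))
    (hg : g ∈ S.lowerCentralSeries d) : faceEl G g F ∈ N := by
  induction d generalizing g F with
  | zero => exact hN g hg F hF
  | succ d ih =>
    obtain ⟨F₁, F₂, hF₁, hF₂, rfl⟩ := hF.exists_eq_inter
    have hle : S.lowerCentralSeries (d + 1) ≤ N.comap (faceHom G (F₁ ∩ F₂)) := by
      rw [Subgroup.lowerCentralSeries_succ, Subgroup.commutator_le]
      intro x hx y hy
      have hx' : faceEl G x F₁ ∈ N := ih hF₁ hx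
      have hy' : faceEl G y F₂ ∈ N := hN y hy F₂ hF₂
      rw [Subgroup.mem_comap, faceHom_apply, ← commutatorElement_faceEl, commutatorElement_def]
      exact N.mul_mem (N.mul_mem (N.mul_mem hx' hy') (N.inv_mem hx')) (N.inv_mem hy')
    exact hle hg

theorem statement9_general {G : Type*} [Group G] {ℓ : ℕ} :
    Subgroup.closure {γ : (Fin ℓ → Bool) → G |
        ∃ (i : ℕ) (g : G) (F : Set (Fin ℓ → Bool)),
          1 ≤ i ∧ IsFaceOfCodim F i ∧ g ∈ (⊤ : Subgroup G).lowerCentralSeries (i - 1) ∧ γ = faceEl G g F} =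
      Subgroup.closure {γ : (Fin ℓ → Bool) → G |
        ∃ (g : G) (F : Set (Fin ℓ → Bool)), IsFaceOfCodim F 1 ∧ γ = faceEl G g F} := by
  apply le_antisymm
  · rw [Subgroup.closure_le]
    rintro _ ⟨i, g, F, hi, hF, hg, rfl⟩
    obtain ⟨d, rfl⟩ : ∃ d, i = d + 1 := ⟨i - 1, by omega⟩
    refine faceEl_mem_of_mem_lowerCentralSeries ?_ hF hg
    exact fun h _ F hF => Subgroup.subset_closure ⟨h, F, hF, rfl⟩
  · rw [Subgroup.closure_le]
    rintro _ ⟨g, F, hF, rfl⟩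
    exact Subgroup.subset_closure ⟨1, g, F, le_rfl, hF, trivial, rfl⟩

/-- The Host–Kra cube group of the lower central series filtration
(`G₀ = G₁ = G`, `G_{i+1} = [G, G_i]`, so that for `i ≥ 1`, `G_i = lowerCentralSeries G (i-1)`),
generated by the elements `[g]_F` with `F` a face of codimension `i` and `g ∈ G_i`,
coincides with the subgroup generated by the `[h]_F` with `F` a hyperface (face of
codimension `1`) and `h ∈ G`. -/
theorem statement9 {G : Type*} [Group G] {ℓ : ℕ} (hℓ : 1 ≤ ℓ) :
    Subgroup.closure {γ : (Fin ℓ → Bool) → G |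
        ∃ (i : ℕ) (g : G) (F : Set (Fin ℓ → Bool)),
          1 ≤ i ∧ IsFaceOfCodim F i ∧ g ∈ (⊤ : Subgroup G).lowerCentralSeries (i - 1) ∧ γ = faceEl G g F} =
      Subgroup.closure {γ : (Fin ℓ → Bool) → G |
        ∃ (g : G) (F : Set (Fin ℓ → Bool)), IsFaceOfCodim F 1 ∧ γ = faceEl G g F} :=
  statement9_general
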